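/- arXiv:1803.10706 — 4 statements merged into one kernel-verified Lean document; each statement's English description precedes it below -/
import Mathlib

section
/- For every natural number l, every natural number ν ≥ 2, and every real x with x² ≠ 1, the complementary Legendre polynomials satisfy the three-term recursion 𝒫_ν(x,l) − 2(ν−1−l)x·𝒫_{ν−1}(x,l) = (ν−1)(ν−2l−2)(1−x²)·𝒫_{ν−2}(x,l), where ν−1−l and ν−2l−2 are taken as integers. -/
/-!
`q = (1 - t²)^l` solves the first-order equation `(1 - t²) q' = -2l t q`. Differentiating
this equation `ν - 1` times gives the second-order relation
`(1 - t²) q^(ν) = 2(ν - 1 - l) t q^(ν-1) + (ν - 1)(ν - 2 - 2l) q^(ν-2)`, and multiplying by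
`(1 - t²)^(ν - 1 - l)` turns it into the three-term recursion. The computation is carried
out on polynomials, where iterated derivatives are algebraic.
-/

/-- Complementary Legendre polynomial
`𝒫_ν(x,l) = (1-x²)^(ν-l) · (dᵛ/dtᵛ)(1-t²)^l |_{t=x}` (zpow power). -/
noncomputable def complLegendre (l ν : ℕ) (x : ℝ) : ℝ :=
  (1 - x ^ 2) ^ ((ν : ℤ) - (l : ℤ)) *
    iteratedDeriv ν (fun t : ℝ => (1 - t ^ 2) ^ l) x

namespace Polynomial

variable {R : Type*} [CommRing R]

theorem derivative_one_sub_X_sq : derivative (1 - X ^ 2 : R[X]) = -(2 * X) := by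
  simp [map_ofNat, one_add_one_eq_two]

theorem one_sub_X_sq_mul_derivative_one_sub_X_sq_pow (l : ℕ) :
    (1 - X ^ 2) * derivative ((1 - X ^ 2 : R[X]) ^ l)
      = C (-2 * (l : R)) * X * (1 - X ^ 2) ^ l := by
  rw [derivative_pow, derivative_one_sub_X_sq]
  cases l with
  | zero => simp
  | succ n => simp only [C_mul, C_neg, C_ofNat, map_natCast]; push_cast; ring

theorem one_sub_X_sq_mul_derivative_derivative {q r : R[X]} {b c : R}
    (h : (1 - X ^ 2) * derivative q = C b * X * q + C c * r) :
    (1 - X ^ 2) * derivative (derivative q)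
      = C (b + 2) * X * derivative q + C b * q + C c * derivative r := by
  have h' := congrArg derivative h
  simp only [derivative_mul, derivative_add, derivative_one_sub_X_sq, derivative_C,
    derivative_X, zero_mul, zero_add, mul_one] at h'
  simp only [C_add, C_ofNat]
  linear_combination h'

theorem one_sub_X_sq_mul_iterate_derivative_add_two {p : R[X]} {a : R}
    (h : (1 - X ^ 2) * derivative p = C a * X * p) (m : ℕ) :
    (1 - X ^ 2) * derivative^[m + 2] p
      = C (2 * (m + 1) + a) * X * derivative^[m + 1] p
        + C ((m + 1) * (m + a)) * derivative^[m] p := by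
  induction m with
  | zero =>
    have h₀ : (1 - X ^ 2) * derivative p = C a * X * p + C 0 * 0 := by simpa using h
    simpa [add_comm a 2] using one_sub_X_sq_mul_derivative_derivative h₀
  | succ m ih =>
    rw [Function.iterate_succ_apply'] at ih
    rw [show m + 1 + 2 = m + 1 + 1 + 1 from rfl, Function.iterate_succ_apply',
      Function.iterate_succ_apply', one_sub_X_sq_mul_derivative_derivative ih,
      ← Function.iterate_succ_apply' derivative m, add_assoc, ← add_mul, ← C_add]
    push_cast
    rw [show 2 * ((m : R) + 1) + a + 2 = 2 * (m + 1 + 1) + a by ring,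
      show 2 * ((m : R) + 1) + a + (m + 1) * (m + a) = (m + 1 + 1) * (m + 1 + a) by ring]

theorem iteratedDeriv_eval {𝕜 : Type*} [NontriviallyNormedField 𝕜] (p : 𝕜[X]) (n : ℕ) :
    iteratedDeriv n (fun t : 𝕜 => p.eval t) = fun x => (derivative^[n] p).eval x := by
  induction n with
  | zero => simp
  | succ n ih =>
    rw [iteratedDeriv_succ, ih, Function.iterate_succ_apply']
    funext x
    exact Polynomial.deriv _

end Polynomial

open Polynomial

theorem complLegendre_eq_eval (l ν : ℕ) (x : ℝ) :
    complLegendre l ν x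
      = (1 - x ^ 2) ^ ((ν : ℤ) - l) * (derivative^[ν] ((1 - X ^ 2 : ℝ[X]) ^ l)).eval x := by
  have hq : (fun t : ℝ => (1 - t ^ 2) ^ l) = fun t => ((1 - X ^ 2 : ℝ[X]) ^ l).eval t := by
    simp
  rw [complLegendre, hq, iteratedDeriv_eval]

theorem one_sub_sq_mul_iterate_derivative_one_sub_X_sq_pow_eval (l m : ℕ) (x : ℝ) :
    (1 - x ^ 2) * (derivative^[m + 2] ((1 - X ^ 2 : ℝ[X]) ^ l)).eval x
      = 2 * (m + 1 - l) * x * (derivative^[m + 1] ((1 - X ^ 2 : ℝ[X]) ^ l)).eval x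
        + (m + 1) * (m - 2 * l) * (derivative^[m] ((1 - X ^ 2 : ℝ[X]) ^ l)).eval x := by
  have := congrArg (eval x) <| one_sub_X_sq_mul_iterate_derivative_add_two
    (one_sub_X_sq_mul_derivative_one_sub_X_sq_pow l) m
  simp only [eval_mul, eval_add, eval_sub, eval_one, eval_pow, eval_X, eval_C] at this
  linear_combination this

theorem complLegendre_three_term (l ν : ℕ) (hν : 2 ≤ ν) (x : ℝ) (hx : x ^ 2 ≠ 1) :
    complLegendre l ν x
        - 2 * (((ν : ℤ) - 1 - (l : ℤ) : ℤ) : ℝ) * x * complLegendre l (ν - 1) x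
      = ((ν : ℝ) - 1) * (((ν : ℤ) - 2 * (l : ℤ) - 2 : ℤ) : ℝ) * (1 - x ^ 2)
          * complLegendre l (ν - 2) x := by
  obtain ⟨m, rfl⟩ : ∃ m, ν = m + 2 := ⟨ν - 2, (Nat.sub_add_cancel hν).symm⟩
  have h₀ : (1 - x ^ 2 : ℝ) ≠ 0 := sub_ne_zero.mpr hx.symm
  have hexp₁ : ((m + 1 : ℕ) : ℤ) - l = (m - l) + 1 := by push_cast; ring
  have hexp₂ : ((m + 2 : ℕ) : ℤ) - l = (m - l) + 1 + 1 := by push_cast; ring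
  simp only [complLegendre_eq_eval, Nat.add_sub_cancel, show m + 2 - 1 = m + 1 from rfl,
    hexp₁, hexp₂, zpow_add_one₀ h₀]
  push_cast
  linear_combination (1 - x ^ 2) ^ ((m : ℤ) - l) * (1 - x ^ 2) *
    one_sub_sq_mul_iterate_derivative_one_sub_X_sq_pow_eval l m x
end

section
/- Fix a real parameter c and natural numbers l and ν with ν ≥ 1. For every real x > 0, the derivative of the complementary polynomial of the confluent hypergeometric equation satisfies (d/dx)𝒫_ν(x,l) = −ν·𝒫_{ν−1}(x,l). -/
/-- Complementary polynomial of the confluent hypergeometric equation: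
`𝒫_ν(x,l) = x^(1-c+ν-l) · e^x · (dᵛ/dtᵛ)(t^(c-1+l) e^(-t)) |_{t=x}` (rpow powers). -/
noncomputable def complConfluent (c : ℝ) (l ν : ℕ) (x : ℝ) : ℝ :=
  x ^ (1 - c + (ν : ℝ) - (l : ℝ)) * Real.exp x *
    iteratedDeriv ν (fun t : ℝ => t ^ (c - 1 + (l : ℝ)) * Real.exp (-t)) x

/-!
Write `a = c - 1 + l` and `f t = t ^ a * e ^ (-t)`, so that `𝒫_ν(x) = x ^ (ν - a) * e ^ x * f⁽ᵛ⁾(x)`.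
The weight satisfies the first-order equation `x f' = (a - x) f`; differentiating it `n` times
gives the three-term recurrence `x f⁽ⁿ⁺¹⁾ = (a - x - n) f⁽ⁿ⁾ - n f⁽ⁿ⁻¹⁾`. In the product-rule
expansion of `𝒫_ν'` the recurrence (with `n = ν`) cancels every term except `-ν 𝒫_{ν-1}`.
-/

open Real Set
open scoped ContDiff

section IteratedDeriv

variable {𝕜 : Type*} [NontriviallyNormedField 𝕜] {U : Set 𝕜}

theorem ContDiffOn.iteratedDeriv_of_isOpen {F : Type*} [NormedAddCommGroup F] [NormedSpace 𝕜 F]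
    {f : 𝕜 → F} (hf : ContDiffOn 𝕜 ∞ f U) (hU : IsOpen U) (n : ℕ) :
    ContDiffOn 𝕜 ∞ (iteratedDeriv n f) U := by
  induction n with
  | zero => simpa using hf
  | succ n ih =>
    rw [iteratedDeriv_succ]
    exact ((contDiffOn_infty_iff_deriv_of_isOpen hU).1 ih).2

theorem ContDiffOn.hasDerivAt_iteratedDeriv {F : Type*} [NormedAddCommGroup F] [NormedSpace 𝕜 F]
    {f : 𝕜 → F} (hf : ContDiffOn 𝕜 ∞ f U) (hU : IsOpen U) {x : 𝕜} (hx : x ∈ U) (n : ℕ) :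
    HasDerivAt (iteratedDeriv n f) (iteratedDeriv (n + 1) f x) x := by
  rw [iteratedDeriv_succ]
  exact (((hf.iteratedDeriv_of_isOpen hU n).differentiableOn (by simp)).differentiableAt
    (hU.mem_nhds hx)).hasDerivAt

theorem mul_iteratedDeriv_succ_eq_of_mul_deriv_eq {f : 𝕜 → 𝕜} {a : 𝕜}
    (hf : ContDiffOn 𝕜 ∞ f U) (hU : IsOpen U) (hode : ∀ x ∈ U, x * deriv f x = (a - x) * f x)
    (n : ℕ) {x : 𝕜} (hx : x ∈ U) :
    x * iteratedDeriv (n + 1) f x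
      = (a - x - n) * iteratedDeriv n f x - n * iteratedDeriv (n - 1) f x := by
  induction n generalizing x with
  | zero => simpa using hode x hx
  | succ n ih =>
    have hlhs : HasDerivAt (fun y => y * iteratedDeriv (n + 1) f y)
        (1 * iteratedDeriv (n + 1) f x + x * iteratedDeriv (n + 2) f x) x :=
      (hasDerivAt_id x).mul (hf.hasDerivAt_iteratedDeriv hU hx (n + 1))
    have hrhs : HasDerivAt (fun y => (a - y - n) * iteratedDeriv n f y
          - n * iteratedDeriv (n - 1) f y)
        (-1 * iteratedDeriv n f x + (a - x - n) * iteratedDeriv (n + 1) f x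
          - n * iteratedDeriv (n - 1 + 1) f x) x :=
      ((((hasDerivAt_id x).const_sub a).sub_const (n : 𝕜)).mul
        (hf.hasDerivAt_iteratedDeriv hU hx n)).sub
        ((hf.hasDerivAt_iteratedDeriv hU hx (n - 1)).const_mul (n : 𝕜))
    have hdiff := hlhs.unique <| hrhs.congr_of_eventuallyEq <|
      Filter.eventually_of_mem (hU.mem_nhds hx) fun y hy => ih hy
    have hshift : (n : 𝕜) * iteratedDeriv (n - 1 + 1) f x = n * iteratedDeriv n f x := by
      rcases n with _ | n <;> simp
    rw [Nat.add_sub_cancel]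
    push_cast
    linear_combination hdiff - hshift

end IteratedDeriv

theorem contDiffOn_rpow_mul_exp_neg (a : ℝ) :
    ContDiffOn ℝ ∞ (fun t => t ^ a * exp (-t)) (Ioi 0) := fun _ hx =>
  ((contDiffAt_rpow_const_of_ne (ne_of_gt hx)).mul
    (contDiff_exp.comp contDiff_neg).contDiffAt).contDiffWithinAt

theorem mul_deriv_rpow_mul_exp_neg (a : ℝ) {x : ℝ} (hx : 0 < x) :
    x * deriv (fun t => t ^ a * exp (-t)) x = (a - x) * (x ^ a * exp (-x)) := by
  rw [((hasDerivAt_rpow_const (p := a) (Or.inl hx.ne')).fun_mul (hasDerivAt_neg x).exp).deriv]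
  have hpow : x * x ^ (a - 1) = x ^ a := by
    rw [mul_comm, ← rpow_add_one hx.ne', sub_add_cancel]
  linear_combination (a * exp (-x)) * hpow

theorem hasDerivAt_rpow_mul_exp_mul_iteratedDeriv {f : ℝ → ℝ} {a : ℝ}
    (hf : ContDiffOn ℝ ∞ f (Ioi 0)) (hode : ∀ x ∈ Ioi 0, x * deriv f x = (a - x) * f x)
    (ν : ℕ) {x : ℝ} (hx : 0 < x) :
    HasDerivAt (fun t => t ^ ((ν : ℝ) - a) * exp t * iteratedDeriv ν f t)
      (-ν * (x ^ ((ν : ℝ) - 1 - a) * exp x * iteratedDeriv (ν - 1) f x)) x := by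
  have h := ((hasDerivAt_rpow_const (p := (ν : ℝ) - a) (Or.inl hx.ne')).fun_mul
    (hasDerivAt_exp x)).fun_mul (hf.hasDerivAt_iteratedDeriv isOpen_Ioi hx ν)
  refine h.congr_deriv ?_
  have hrec := mul_iteratedDeriv_succ_eq_of_mul_deriv_eq hf isOpen_Ioi hode ν hx
  have hpow : x ^ ((ν : ℝ) - a) = x * x ^ ((ν : ℝ) - 1 - a) := by
    rw [mul_comm, ← rpow_add_one hx.ne']
    ring_nf
  rw [hpow, sub_right_comm]
  linear_combination (x ^ ((ν : ℝ) - 1 - a) * exp x) * hrec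

theorem complConfluent_deriv_general (c : ℝ) (l ν : ℕ) (x : ℝ) (hx : 0 < x) :
    deriv (fun t => complConfluent c l ν t) x
      = -(ν : ℝ) * complConfluent c l (ν - 1) x := by
  have hP (n : ℕ) : complConfluent c l n = fun t => t ^ ((n : ℝ) - (c - 1 + l)) * exp t *
      iteratedDeriv n (fun t => t ^ (c - 1 + (l : ℝ)) * exp (-t)) t := by
    funext t
    rw [complConfluent, show 1 - c + (n : ℝ) - l = n - (c - 1 + l) by ring]
  have hderiv := hasDerivAt_rpow_mul_exp_mul_iteratedDeriv
    (contDiffOn_rpow_mul_exp_neg (c - 1 + l)) (fun _ hy => mul_deriv_rpow_mul_exp_neg _ hy) ν hx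
  rw [hP ν, hderiv.deriv, hP (ν - 1)]
  cases ν <;> simp

theorem complConfluent_deriv (c : ℝ) (l ν : ℕ) (hν : 1 ≤ ν) (x : ℝ) (hx : 0 < x) :
    deriv (fun t => complConfluent c l ν t) x
      = -(ν : ℝ) * complConfluent c l (ν - 1) x :=
  complConfluent_deriv_general c l ν x hx
end

section
/- Fix a real parameter c and a natural number l. For every natural number ν and all reals x₁ > 0, x₂ > 0, the complementary polynomials of the confluent hypergeometric equation satisfy the addition law Σ_{λ=0}^{ν} C(c−1+l, ν−λ)·(ν!/λ!)·𝒫_λ(x₁+x₂, l) = Σ_{ν₁=0}^{ν} binom(ν,ν₁)·𝒫_{ν₁}(x₁,l)·𝒫_{ν−ν₁}(x₂,l), where C(r,k) = (∏_{i=0}^{k−1}(r−i))/k! is the generalized binomial coefficient. -/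
/-- Generalized binomial coefficient `C(r,k) = (∏_{i<k} (r-i)) / k!`. -/
noncomputable def genBinom (r : ℝ) (k : ℕ) : ℝ :=
  (∏ i ∈ Finset.range k, (r - (i : ℝ))) / (Nat.factorial k : ℝ)

open Finset PowerSeries
open scoped Nat

theorem PowerSeries.factorial_mul_coeff_mul {R : Type*} [CommSemiring R] (f g : R⟦X⟧)
    (n : ℕ) :
    (n ! : R) * coeff n (f * g) = ∑ j ∈ range (n + 1),
      (n.choose j : R) * ((j ! : R) * coeff j f) * (((n - j) ! : R) * coeff (n - j) g) := by
  rw [coeff_mul, Nat.sum_antidiagonal_eq_sum_range_succ_mk, mul_sum]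
  refine sum_congr rfl fun j hj => ?_
  rw [← Nat.choose_mul_factorial_mul_factorial (Nat.le_of_lt_succ (mem_range.mp hj))]
  push_cast
  ring

theorem PowerSeries.factorial_mul_coeff_rescale_exp {A : Type*} [CommRing A] [Algebra ℚ A]
    (x : A) (n : ℕ) : (n ! : A) * coeff n (rescale x (exp A)) = x ^ n := by
  rw [coeff_rescale, coeff_exp, mul_left_comm, ← map_natCast (algebraMap ℚ A), ← map_mul,
    mul_one_div_cancel (by positivity), map_one, mul_one]

theorem descPochhammer_eval_eq_factorial_mul_genBinom (r : ℝ) (k : ℕ) :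
    (descPochhammer ℝ k).eval r = k ! * genBinom r k := by
  rw [genBinom, descPochhammer_eval_eq_prod_range, mul_div_cancel₀ _ (by positivity)]

theorem iteratedDeriv_rpow_mul_exp_neg {a x : ℝ} (hx : x ≠ 0) (n : ℕ) :
    iteratedDeriv n (fun t => t ^ a * Real.exp (-t)) x = ∑ j ∈ range (n + 1),
      n.choose j * ((descPochhammer ℝ j).eval a * x ^ (a - j))
        * ((-1) ^ (n - j) * Real.exp (-x)) := by
  have hexp : (fun t : ℝ => Real.exp (-t)) = fun t => Real.exp (-1 * t) := by simp
  rw [iteratedDeriv_fun_mul (Real.contDiffAt_rpow_const (Or.inl hx)) (by fun_prop)]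
  refine sum_congr rfl fun j _ => ?_
  rw [iteratedDeriv_eq_iterate, Real.iter_deriv_rpow_const, hexp, iteratedDeriv_exp_const_mul]
  simp

theorem complConfluent_eq_sum (c : ℝ) (l n : ℕ) {x : ℝ} (hx : 0 < x) :
    complConfluent c l n x = ∑ j ∈ range (n + 1),
      n.choose j * (descPochhammer ℝ j).eval (c - 1 + l) * (-x) ^ (n - j) := by
  rw [complConfluent, iteratedDeriv_rpow_mul_exp_neg hx.ne', mul_sum]
  refine sum_congr rfl fun j hj => ?_
  have hpow : x ^ (1 - c + n - l) * x ^ (c - 1 + l - j) = x ^ (n - j) := by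
    rw [← Real.rpow_add hx, ← Real.rpow_natCast,
      Nat.cast_sub (Nat.le_of_lt_succ (mem_range.mp hj))]
    ring_nf
  have hexp : Real.exp x * Real.exp (-x) = 1 := by rw [← Real.exp_add]; simp
  rw [neg_pow]
  linear_combination (n.choose j * (descPochhammer ℝ j).eval (c - 1 + l) * (-1) ^ (n - j))
    * (x ^ (1 - c + n - l) * x ^ (c - 1 + l - j) * hexp + hpow)

/-- The formal series `(1 + t) ^ a * exp (-x t)`. -/
noncomputable def confluentGF (a x : ℝ) : ℝ⟦X⟧ :=
  mk (genBinom a) * rescale (-x) (exp ℝ)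

theorem complConfluent_eq_factorial_mul_coeff (c : ℝ) (l n : ℕ) {x : ℝ} (hx : 0 < x) :
    complConfluent c l n x = n ! * coeff n (confluentGF (c - 1 + l) x) := by
  rw [confluentGF, factorial_mul_coeff_mul, complConfluent_eq_sum c l n hx]
  refine sum_congr rfl fun j _ => ?_
  rw [coeff_mk, ← descPochhammer_eval_eq_factorial_mul_genBinom, factorial_mul_coeff_rescale_exp,
    mul_assoc]

theorem confluentGF_mul_confluentGF (a x y : ℝ) :
    confluentGF a x * confluentGF a y = confluentGF a (x + y) * mk (genBinom a) := by
  rw [confluentGF, confluentGF, confluentGF, neg_add, ← exp_mul_exp_eq_exp_add]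
  ring

theorem complConfluent_addition (c : ℝ) (l ν : ℕ) (x₁ x₂ : ℝ) (hx₁ : 0 < x₁)
    (hx₂ : 0 < x₂) :
    (∑ lam ∈ Finset.range (ν + 1),
        genBinom (c - 1 + (l : ℝ)) (ν - lam)
          * ((Nat.factorial ν : ℝ) / (Nat.factorial lam : ℝ))
          * complConfluent c l lam (x₁ + x₂))
      = ∑ ν₁ ∈ Finset.range (ν + 1),
          (Nat.choose ν ν₁ : ℝ) * complConfluent c l ν₁ x₁
            * complConfluent c l (ν - ν₁) x₂ := by
  have hsum : ∑ lam ∈ range (ν + 1), genBinom (c - 1 + l) (ν - lam) * ((ν ! : ℝ) / lam !)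
      * complConfluent c l lam (x₁ + x₂)
      = ν ! * coeff ν (confluentGF (c - 1 + l) (x₁ + x₂) * mk (genBinom (c - 1 + l))) := by
    rw [coeff_mul, Nat.sum_antidiagonal_eq_sum_range_succ_mk, mul_sum]
    refine sum_congr rfl fun lam _ => ?_
    rw [complConfluent_eq_factorial_mul_coeff c l lam (by positivity), coeff_mk]
    field_simp
  have hprod : ∑ ν₁ ∈ range (ν + 1), (ν.choose ν₁ : ℝ) * complConfluent c l ν₁ x₁
      * complConfluent c l (ν - ν₁) x₂
      = ν ! * coeff ν (confluentGF (c - 1 + l) x₁ * confluentGF (c - 1 + l) x₂) := by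
    rw [factorial_mul_coeff_mul]
    simp only [complConfluent_eq_factorial_mul_coeff c l _ hx₁,
      complConfluent_eq_factorial_mul_coeff c l _ hx₂]
  rw [hsum, hprod, confluentGF_mul_confluentGF]
end

section
/- Fix real parameters a, b, c and natural numbers l and ν. For every real x with 0 < x < 1, the complementary polynomial of the hypergeometric equation has the explicit form 𝒫_ν(x,l) = ν! · Σ_{λ=0}^{ν} C(l+a+b−c, λ)·C(l+c−1, ν−λ)·(1−x)^{ν−λ}·(−x)^λ, where C(r,k) = (∏_{i=0}^{k−1}(r−i))/k! is the generalized binomial coefficient. -/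
/-! Leibniz's rule expands the `ν`-th derivative of `t^(c-1+l) (1-t)^(l+a+b-c)` into products of
derivatives of the two factors, each a falling factorial times a shifted rpow power. The prefactor
`x^(ν+1-c-l) (1-x)^(ν-l+c-a-b)` collapses these shifted powers to `x^λ (1-x)^(ν-λ)`, and
`choose ν λ = ν! / (λ! (ν-λ)!)` splits the factorials between the two generalized binomials. -/

/-- Complementary polynomial of the hypergeometric equation:
`𝒫_ν(x,l) = x^(ν+1-c-l) (1-x)^(ν-l+c-a-b) (dᵛ/dtᵛ)(t^(c-1+l)(1-t)^(l+a+b-c)) |_{t=x}`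
(rpow powers). -/
noncomputable def complHypergeom (a b c : ℝ) (l ν : ℕ) (x : ℝ) : ℝ :=
  x ^ ((ν : ℝ) + 1 - c - (l : ℝ)) * (1 - x) ^ ((ν : ℝ) - (l : ℝ) + c - a - b) *
    iteratedDeriv ν
      (fun t : ℝ => t ^ (c - 1 + (l : ℝ)) * (1 - t) ^ ((l : ℝ) + a + b - c)) x

open Finset Polynomial

theorem genBinom_eq_descPochhammer_eval_div (r : ℝ) (k : ℕ) :
    genBinom r k = (descPochhammer ℝ k).eval r / k.factorial := by
  rw [genBinom, descPochhammer_eval_eq_prod_range]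

theorem Real.rpow_mul_rpow_of_add_eq_natCast {x : ℝ} (hx : 0 < x) {α β : ℝ} {n : ℕ}
    (h : α + β = n) : x ^ α * x ^ β = x ^ n := by
  rw [← Real.rpow_add hx, h, Real.rpow_natCast]

theorem iteratedDeriv_rpow_const (p x : ℝ) (k : ℕ) :
    iteratedDeriv k (fun t => t ^ p) x = (descPochhammer ℝ k).eval p * x ^ (p - k) := by
  rw [iteratedDeriv_eq_iterate, Real.iter_deriv_rpow_const]

theorem iteratedDeriv_one_sub_rpow_const (q x : ℝ) (k : ℕ) :
    iteratedDeriv k (fun t => (1 - t) ^ q) x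
      = (-1) ^ k * (descPochhammer ℝ k).eval q * (1 - x) ^ (q - k) := by
  simp only [iteratedDeriv_comp_const_sub k (fun t => t ^ q), smul_eq_mul,
    iteratedDeriv_rpow_const, mul_assoc]

theorem iteratedDeriv_rpow_mul_one_sub_rpow (p q : ℝ) (n : ℕ) {x : ℝ} (hx0 : x ≠ 0)
    (hx1 : x ≠ 1) :
    iteratedDeriv n (fun t => t ^ p * (1 - t) ^ q) x
      = ∑ k ∈ range (n + 1), n.choose k
          * ((-1) ^ k * (descPochhammer ℝ k).eval q * (1 - x) ^ (q - k))
          * ((descPochhammer ℝ (n - k)).eval p * x ^ (p - (n - k : ℕ))) := by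
  have hpow : ContDiffAt ℝ n (fun t : ℝ => t ^ p) x := Real.contDiffAt_rpow_const (Or.inl hx0)
  have hsub : ContDiffAt ℝ n (fun t : ℝ => (1 - t) ^ q) x :=
    (Real.contDiffAt_rpow_const (Or.inl (sub_ne_zero.mpr hx1.symm))).comp x
      (contDiffAt_const.sub contDiffAt_id)
  simp_rw [mul_comm (_ ^ p), iteratedDeriv_fun_mul hsub hpow, iteratedDeriv_rpow_const,
    iteratedDeriv_one_sub_rpow_const]

theorem complHypergeom_explicit (a b c : ℝ) (l ν : ℕ) (x : ℝ) (hx0 : 0 < x)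
    (hx1 : x < 1) :
    complHypergeom a b c l ν x
      = (Nat.factorial ν : ℝ) *
          ∑ lam ∈ Finset.range (ν + 1),
            genBinom ((l : ℝ) + a + b - c) lam * genBinom ((l : ℝ) + c - 1) (ν - lam)
              * (1 - x) ^ (ν - lam) * (-x) ^ lam := by
  rw [complHypergeom, iteratedDeriv_rpow_mul_one_sub_rpow _ _ _ hx0.ne' hx1.ne, mul_sum, mul_sum]
  refine sum_congr rfl fun k hk => ?_
  have hkν : k ≤ ν := Nat.lt_succ_iff.mp (mem_range.mp hk)
  have hxpow : x ^ ((ν : ℝ) + 1 - c - l) * x ^ (c - 1 + l - (ν - k : ℕ)) = x ^ k :=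
    Real.rpow_mul_rpow_of_add_eq_natCast hx0 (by push_cast [Nat.cast_sub hkν]; ring)
  have h1xpow : (1 - x) ^ ((ν : ℝ) - l + c - a - b) * (1 - x) ^ (l + a + b - c - k)
      = (1 - x) ^ (ν - k) :=
    Real.rpow_mul_rpow_of_add_eq_natCast (sub_pos.mpr hx1)
      (by push_cast [Nat.cast_sub hkν]; ring)
  rw [genBinom_eq_descPochhammer_eval_div, genBinom_eq_descPochhammer_eval_div,
    Nat.cast_choose ℝ hkν, show (l : ℝ) + c - 1 = c - 1 + l by ring, neg_pow x, ← hxpow, ← h1xpow]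
  field_simp
end
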